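/- Let φ : ℝ → ℝ be bounded and measurable, μ > e, ε(μ) = log²μ/μ, φ_μ = ρ_μ * φ and φ_μ• the truncated convolution over (t−ε(μ), t) with kernel ρ_μ(s)=μe^{−μs}𝟙_{[0,∞)}. Then the difference r_μ(t) = φ_μ(t) − φ_μ•(t) = μ∫_{−∞}^{t−ε(μ)} e^{μ(s−t)} φ(s) ds satisfies ‖∂_t r_μ‖_{L^∞} ≤ 2‖φ‖_{L^∞}·μ e^{−μ ε(μ)} = 2‖φ‖_{L^∞} e^{log μ (1 − log μ)}, which tends to 0 as μ → ∞. -/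
import Mathlib

open MeasureTheory Filter Topology Real

section Helpers
open Set intervalIntegral

lemma hasDerivAt_expMul {μ : ℝ} (hμ : μ ≠ 0) (x : ℝ) :
    HasDerivAt (fun y => Real.exp (μ * y) / μ) (Real.exp (μ * x)) x := by
  have h := (((hasDerivAt_id x).const_mul μ).exp).div_const μ
  simpa [mul_div_cancel_right₀ _ hμ] using h

lemma intervalIntegral_expMul {μ : ℝ} (hμ : μ ≠ 0) (y a : ℝ) :
    ∫ x in y..a, Real.exp (μ * x) = Real.exp (μ * a) / μ - Real.exp (μ * y) / μ :=
  intervalIntegral.integral_eq_sub_of_hasDerivAt (fun x _ => hasDerivAt_expMul hμ x)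
    ((Real.continuous_exp.comp (continuous_const.mul continuous_id)).intervalIntegrable _ _)

lemma expMulIntegrable {μ : ℝ} (hμ : 0 < μ) (a : ℝ) :
    IntegrableOn (fun s => Real.exp (μ * s)) (Set.Iic a) := by
  refine integrableOn_Iic_of_intervalIntegral_norm_bounded (Real.exp (μ * a) / μ) a
    (fun y => ((Real.continuous_exp.comp (continuous_const.mul continuous_id)).integrableOn_Ioc)) tendsto_id
    (Filter.Eventually.of_forall fun y => ?_)
  simp only [Real.norm_eq_abs, abs_of_pos (Real.exp_pos _), id]
  rw [intervalIntegral_expMul hμ.ne']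
  have := (Real.exp_pos (μ * y)).le
  have h2 := hμ
  nlinarith [div_nonneg (Real.exp_pos (μ * y)).le hμ.le]

lemma integral_expMul_Iic {μ : ℝ} (hμ : 0 < μ) (a : ℝ) :
    ∫ s in Set.Iic a, Real.exp (μ * s) = Real.exp (μ * a) / μ := by
  refine tendsto_nhds_unique
    (intervalIntegral_tendsto_integral_Iic a (expMulIntegrable hμ a) tendsto_id) ?_
  simp only [intervalIntegral_expMul hμ.ne', id]
  have h1 : Tendsto (fun y : ℝ => μ * y) atBot atBot :=
    (tendsto_const_mul_atBot_of_pos hμ).mpr tendsto_id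
  have h2 : Tendsto (fun y : ℝ => Real.exp (μ * y) / μ) atBot (𝓝 0) := by
    simpa using ((Real.tendsto_exp_atBot.comp h1).div_const μ)
  simpa using Filter.Tendsto.const_sub (Real.exp (μ * a) / μ) h2


lemma integrandIntegrable {φ : ℝ → ℝ} (hmeas : Measurable φ) {C : ℝ}
    (hbd : ∀ t, |φ t| ≤ C) {μ : ℝ} (hμ : 0 < μ) (a : ℝ) :
    IntegrableOn (fun s => Real.exp (μ * s) * φ s) (Set.Iic a) := by
  refine Integrable.mono' ((expMulIntegrable hμ a).const_mul C)
    ((Real.measurable_exp.comp (measurable_const.mul measurable_id)).mul hmeas).aestronglyMeasurable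
    (Filter.Eventually.of_forall fun s => ?_)
  rw [Real.norm_eq_abs, abs_mul, abs_of_pos (Real.exp_pos _), mul_comm C]
  exact mul_le_mul_of_nonneg_left (hbd s) (Real.exp_pos _).le
end Helpers

/-- Tail remainder `r_μ(t) = μ∫_{-∞}^{t-ε(μ)} e^{μ(s-t)}φ(s)ds`, `ε(μ)=log²μ/μ`. -/
noncomputable def tailRem (φ : ℝ → ℝ) (μ : ℝ) (t : ℝ) : ℝ :=
  μ * ∫ s in Set.Iic (t - (Real.log μ) ^ 2 / μ), Real.exp (μ * (s - t)) * φ s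

theorem tailRem_derivative_bound (φ : ℝ → ℝ) (hmeas : Measurable φ)
    (C : ℝ) (hC : 0 ≤ C) (hbd : ∀ t, |φ t| ≤ C) :
    (∀ μ : ℝ, Real.exp 1 < μ → ∀ t d : ℝ, HasDerivAt (tailRem φ μ) d t →
      |d| ≤ 2 * C * μ * Real.exp (-(μ * ((Real.log μ) ^ 2 / μ)))) ∧
    (∀ μ : ℝ, Real.exp 1 < μ →
      2 * C * μ * Real.exp (-(μ * ((Real.log μ) ^ 2 / μ)))
        = 2 * C * Real.exp (Real.log μ * (1 - Real.log μ))) ∧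
    Tendsto (fun μ : ℝ => 2 * C * Real.exp (Real.log μ * (1 - Real.log μ)))
      atTop (𝓝 0) := by
  refine ⟨?_, ?_, ?_⟩
  · intro μ hμ t d hd
    have hμ0 : 0 < μ := lt_trans (Real.exp_pos 1) hμ
    set ε : ℝ := (Real.log μ) ^ 2 / μ with hε
    set G : ℝ → ℝ := fun x => ∫ s in Set.Iic (x - ε), Real.exp (μ * s) * φ s with hG
    have hee : ∀ x : ℝ, Real.exp (-(μ * x)) * Real.exp (μ * x) = 1 := by
      intro x; rw [← Real.exp_add]; simp
    have key : ∀ x, tailRem φ μ x = μ * (Real.exp (-(μ * x)) * G x) := by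
      intro x
      have hGx : G x = ∫ s in Set.Iic (x - ε), Real.exp (μ * s) * φ s := rfl
      have hml := MeasureTheory.integral_const_mul (μ := volume.restrict (Set.Iic (x - ε)))
        (Real.exp (-(μ * x))) (fun s => Real.exp (μ * s) * φ s)
      rw [tailRem, hGx, ← hml]
      congr 1
      refine setIntegral_congr_fun measurableSet_Iic fun s _ => ?_
      rw [← mul_assoc, ← Real.exp_add]
      ring_nf
    have keyG : ∀ x, G x = μ⁻¹ * (Real.exp (μ * x) * tailRem φ μ x) := by
      intro x
      rw [key x, show μ⁻¹ * (Real.exp (μ * x) * (μ * (Real.exp (-(μ * x)) * G x)))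
          = (μ⁻¹ * μ) * ((Real.exp (-(μ * x)) * Real.exp (μ * x)) * G x) by ring,
        hee x, inv_mul_cancel₀ hμ0.ne']
      ring
    have hGd : HasDerivAt G
        (μ⁻¹ * (Real.exp (μ * t) * μ * tailRem φ μ t + Real.exp (μ * t) * d)) t := by
      have h1 : HasDerivAt (fun x => Real.exp (μ * x)) (Real.exp (μ * t) * μ) t := by
        simpa [mul_comm] using (((hasDerivAt_id t).const_mul μ).exp)
      have h2 := (h1.mul hd).const_mul μ⁻¹
      rw [funext keyG]
      exact h2
    set d' : ℝ := μ⁻¹ * (Real.exp (μ * t) * μ * tailRem φ μ t + Real.exp (μ * t) * d) with hd'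
    have hE : Real.exp (-(μ * t)) * Real.exp (μ * (t - ε)) = Real.exp (-(μ * ε)) := by
      rw [← Real.exp_add]; ring_nf
    -- bound on tailRem
    have hfeq : (fun s => Real.exp (μ * (s - t)) * φ s)
        = fun s => Real.exp (-(μ * t)) * (Real.exp (μ * s) * φ s) := by
      funext s; rw [← mul_assoc, ← Real.exp_add]; ring_nf
    have hrbd : |tailRem φ μ t| ≤ C * Real.exp (-(μ * ε)) := by
      rw [tailRem, abs_mul, abs_of_pos hμ0]
      have h1 : |∫ s in Set.Iic (t - ε), Real.exp (μ * (s - t)) * φ s|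
          ≤ ∫ s in Set.Iic (t - ε), Real.exp (-(μ * t)) * (C * Real.exp (μ * s)) := by
        refine le_trans (le_of_eq (Real.norm_eq_abs _).symm) ?_
        refine (MeasureTheory.norm_integral_le_integral_norm _).trans ?_
        refine setIntegral_mono_on ?_ ?_ measurableSet_Iic fun s _ => ?_
        · have hint : IntegrableOn (fun s => Real.exp (μ * (s - t)) * φ s) (Set.Iic (t - ε)) := by
            rw [hfeq]
            exact (integrandIntegrable hmeas hbd hμ0 _).const_mul _
          exact hint.norm
        · exact (((expMulIntegrable hμ0 _).const_mul C).const_mul _)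
        · rw [Real.norm_eq_abs, abs_mul, abs_of_pos (Real.exp_pos _)]
          calc Real.exp (μ * (s - t)) * |φ s| ≤ Real.exp (μ * (s - t)) * C :=
                mul_le_mul_of_nonneg_left (hbd s) (Real.exp_pos _).le
            _ = Real.exp (-(μ * t)) * (C * Real.exp (μ * s)) := by
                rw [show Real.exp (-(μ * t)) * (C * Real.exp (μ * s))
                    = (Real.exp (-(μ * t)) * Real.exp (μ * s)) * C by ring, ← Real.exp_add]
                ring_nf
      calc μ * |∫ s in Set.Iic (t - ε), Real.exp (μ * (s - t)) * φ s|
          ≤ μ * ∫ s in Set.Iic (t - ε), Real.exp (-(μ * t)) * (C * Real.exp (μ * s)) :=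
            mul_le_mul_of_nonneg_left h1 hμ0.le
        _ = C * Real.exp (-(μ * ε)) := by
            rw [MeasureTheory.integral_const_mul, MeasureTheory.integral_const_mul,
              integral_expMul_Iic hμ0]
            linear_combination (C * Real.exp (-(μ * t)) * Real.exp (μ * (t - ε)))
              * (mul_inv_cancel₀ hμ0.ne') + C * hE
    -- bound on d'
    have hd'bd : |d'| ≤ C * Real.exp (μ * (t - ε)) := by
      have hslope := hasDerivAt_iff_tendsto_slope.mp hGd
      have habs : Tendsto (fun x => |slope G t x|) (𝓝[≠] t) (𝓝 |d'|) :=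
        (continuous_abs.tendsto _).comp hslope
      have hB : Tendsto (fun x : ℝ => C * Real.exp (μ * (t - ε)) * Real.exp (μ * |x - t|))
          (𝓝[≠] t) (𝓝 (C * Real.exp (μ * (t - ε)))) := by
        have hc : Continuous fun x : ℝ => C * Real.exp (μ * (t - ε)) * Real.exp (μ * |x - t|) :=
          continuous_const.mul (Real.continuous_exp.comp
            (continuous_const.mul ((continuous_id.sub continuous_const).abs)))
        have := (hc.tendsto t).mono_left (nhdsWithin_le_nhds (s := {t}ᶜ))
        simpa using this
      refine le_of_tendsto_of_tendsto habs hB ?_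
      refine eventually_nhdsWithin_of_forall fun x hx => ?_
      have hxt : x ≠ t := hx
      have hdiff : G x - G t = ∫ s in (t - ε)..(x - ε), Real.exp (μ * s) * φ s :=
        intervalIntegral.integral_Iic_sub_Iic (integrandIntegrable hmeas hbd hμ0 _)
          (integrandIntegrable hmeas hbd hμ0 _)
      have hK : ‖∫ s in (t - ε)..(x - ε), Real.exp (μ * s) * φ s‖
          ≤ C * Real.exp (μ * (max x t - ε)) * |x - ε - (t - ε)| := by
        refine intervalIntegral.norm_integral_le_of_norm_le_const fun s hs => ?_
        have hsle : s ≤ max x t - ε := by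
          rcases le_total (t - ε) (x - ε) with h | h
          · rw [Set.uIoc_of_le h] at hs
            exact hs.2.trans (sub_le_sub_right (le_max_left x t) ε)
          · rw [Set.uIoc_of_ge h] at hs
            exact hs.2.trans (sub_le_sub_right (le_max_right x t) ε)
        rw [Real.norm_eq_abs, abs_mul, abs_of_pos (Real.exp_pos _)]
        calc Real.exp (μ * s) * |φ s| ≤ Real.exp (μ * s) * C :=
              mul_le_mul_of_nonneg_left (hbd s) (Real.exp_pos _).le
          _ ≤ C * Real.exp (μ * (max x t - ε)) := by
              rw [mul_comm]
              exact mul_le_mul_of_nonneg_left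
                (Real.exp_le_exp.mpr (mul_le_mul_of_nonneg_left hsle hμ0.le)) hC
      have hxtpos : 0 < |x - t| := abs_pos.mpr (sub_ne_zero.mpr hxt)
      have hslopebd : |slope G t x| ≤ C * Real.exp (μ * (max x t - ε)) := by
        have h1 : |slope G t x| = |G x - G t| / |x - t| := by
          rw [slope_def_field, abs_div]
        rw [h1, hdiff, div_le_iff₀ hxtpos]
        have h2 : |x - ε - (t - ε)| = |x - t| := by congr 1; ring
        rw [← h2]
        simpa [Real.norm_eq_abs] using hK
      refine hslopebd.trans ?_
      show C * Real.exp (μ * (max x t - ε)) ≤ C * Real.exp (μ * (t - ε)) * Real.exp (μ * |x - t|)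
      have hmax : max x t - ε ≤ (t - ε) + |x - t| := by
        rcases le_total x t with h | h
        · rw [max_eq_right h]; linarith [abs_nonneg (x - t)]
        · rw [max_eq_left h, abs_of_nonneg (by linarith : (0:ℝ) ≤ x - t)]; linarith
      rw [mul_assoc, ← Real.exp_add]
      refine mul_le_mul_of_nonneg_left (Real.exp_le_exp.mpr ?_) hC
      calc μ * (max x t - ε) ≤ μ * ((t - ε) + |x - t|) :=
            mul_le_mul_of_nonneg_left hmax hμ0.le
        _ = μ * (t - ε) + μ * |x - t| := by ring
    -- solve for d and conclude
    have hmd' : μ * d' = Real.exp (μ * t) * μ * tailRem φ μ t + Real.exp (μ * t) * d := by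
      rw [hd']; field_simp
    have hdval : d = μ * Real.exp (-(μ * t)) * d' - μ * tailRem φ μ t := by
      linear_combination -((μ * tailRem φ μ t + d) * (μ * μ⁻¹) * hee t)
        - (μ * tailRem φ μ t + d) * mul_inv_cancel₀ hμ0.ne'
    rw [hdval]
    calc |μ * Real.exp (-(μ * t)) * d' - μ * tailRem φ μ t|
        ≤ |μ * Real.exp (-(μ * t)) * d'| + |μ * tailRem φ μ t| := abs_sub _ _
      _ ≤ μ * Real.exp (-(μ * t)) * (C * Real.exp (μ * (t - ε)))
          + μ * (C * Real.exp (-(μ * ε))) := by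
          refine add_le_add ?_ ?_
          · rw [abs_mul, abs_mul, abs_of_pos hμ0, abs_of_pos (Real.exp_pos _)]
            exact mul_le_mul_of_nonneg_left hd'bd (by positivity)
          · rw [abs_mul, abs_of_pos hμ0]
            exact mul_le_mul_of_nonneg_left hrbd hμ0.le
      _ = 2 * C * μ * Real.exp (-(μ * ε)) := by
          linear_combination μ * C * hE
  ·
    intro μ hμ
    have hμ0 : 0 < μ := (Real.exp_pos 1).trans hμ
    rw [show μ * ((Real.log μ) ^ 2 / μ) = (Real.log μ) ^ 2 by field_simp]
    set L := Real.log μ with hL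
    conv_lhs => rw [show μ = Real.exp L from (Real.exp_log hμ0).symm]
    rw [mul_assoc, ← Real.exp_add]
    congr 1
    ring
  ·
    have h1 : Tendsto (fun x : ℝ => x * (1 - x)) atTop atBot := by
      refine tendsto_atBot_mono' atTop ?_ tendsto_neg_atTop_atBot
      filter_upwards [eventually_ge_atTop (2:ℝ)] with x hx
      nlinarith
    have h2 : Tendsto (fun μ : ℝ => Real.log μ * (1 - Real.log μ)) atTop atBot :=
      h1.comp Real.tendsto_log_atTop
    have h3 : Tendsto (fun μ : ℝ => Real.exp (Real.log μ * (1 - Real.log μ))) atTop (𝓝 0) :=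
      Real.tendsto_exp_atBot.comp h2
    have := h3.const_mul (2 * C)
    simpa using this
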